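/- arXiv:2410.22009 — 3 statements merged into one kernel-verified Lean document; each statement's English description precedes it below -/
import Mathlib

section
/- Let σ be the ReLU activation and U ⊆ ℝ^D bounded. If network parameters θ^m converge to θ, then ‖∇N_θ‖_{L^∞(U)} ≤ liminf_{m→∞} ‖∇N_{θ^m}‖_{L^∞(U)}; i.e., the map θ ↦ ‖∇N_θ‖_{L^∞(U)} is sequentially lower semicontinuous with respect to parameter convergence. -/
open scoped NNReal Topology ENNReal
open MeasureTheory

noncomputable def hiddenNet (σ : ℝ → ℝ) (dims : ℕ → ℕ)
    (w : ∀ l : ℕ, (Fin (dims l) → ℝ) →L[ℝ] (Fin (dims (l + 1)) → ℝ))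
    (β : ∀ l : ℕ, Fin (dims (l + 1)) → ℝ) :
    ∀ k : ℕ, (Fin (dims 0) → ℝ) → (Fin (dims k) → ℝ)
  | 0 => id
  | (k + 1) => fun z i => σ ((w k (hiddenNet σ dims w β k z) + β k) i)

noncomputable def fullNet (σ : ℝ → ℝ) (dims : ℕ → ℕ)
    (w : ∀ l : ℕ, (Fin (dims l) → ℝ) →L[ℝ] (Fin (dims (l + 1)) → ℝ))
    (β : ∀ l : ℕ, Fin (dims (l + 1)) → ℝ) (L : ℕ) :
    (Fin (dims 0) → ℝ) → (Fin (dims (L - 1 + 1)) → ℝ) :=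
  fun z => w (L - 1) (hiddenNet σ dims w β (L - 1) z) + β (L - 1)

/-- The ReLU activation. -/
noncomputable def relu : ℝ → ℝ := fun x => max x 0

/-! ### Auxiliary lemmas -/

open Metric Filter

section Aux

variable {E F G : Type*} [NormedAddCommGroup E] [NormedSpace ℝ E]
  [NormedAddCommGroup F] [NormedSpace ℝ F] [NormedAddCommGroup G] [NormedSpace ℝ G]

lemma relu_lip (a b : ℝ) : |relu a - relu b| ≤ |a - b| := abs_max_sub_max_le_abs a b 0

lemma lipschitzWith_relu : LipschitzWith 1 relu := by
  rw [lipschitzWith_iff_dist_le_mul]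
  intro a b
  simpa [Real.dist_eq] using relu_lip a b

/-- At a density point of a set on which `g` vanishes, if `g` is differentiable then its
derivative vanishes. -/
theorem hasFDerivAt_zero_of_density_point [FiniteDimensional ℝ E]
    [MeasurableSpace E] [BorelSpace E] {μ : Measure E} [μ.IsAddHaarMeasure]
    {g : E → ℝ} {Z : Set E} (hZg : ∀ z ∈ Z, g z = 0)
    {x : E} (hx : x ∈ Z)
    (hd : Tendsto (fun r => μ (Z ∩ closedBall x r) / μ (closedBall x r)) (𝓝[>] 0) (𝓝 1))
    {A : E →L[ℝ] ℝ} (hg : HasFDerivAt g A x) : A = 0 := by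
  have hgx : g x = 0 := hZg x hx
  ext v
  simp only [ContinuousLinearMap.zero_apply]
  have key : ∀ ε : ℝ, 0 < ε → ε < 1 → |A v| ≤ ε * (‖v‖ + 1 + ‖A‖) := by
    intro ε hε hε1
    obtain ⟨R, hRpos, hR⟩ : ∃ R : ℝ, 0 < R ∧ R = ‖v‖ + ε :=
      ⟨‖v‖ + ε, by positivity, rfl⟩
    obtain ⟨δ, hδpos, hδ⟩ : ∃ δ : ℝ≥0∞, 0 < δ ∧
        δ = ENNReal.ofReal ((ε / R) ^ Module.finrank ℝ E) := by
      refine ⟨_, ?_, rfl⟩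
      apply ENNReal.ofReal_pos.2
      have : 0 < ε / R := div_pos hε hRpos
      positivity
    have hlo := (hg.isLittleO).def (show (0:ℝ) < ε from hε)
    rw [Metric.eventually_nhds_iff] at hlo
    obtain ⟨η, hη, hball⟩ := hlo
    have hmul0 : Tendsto (fun t : ℝ => t * R) (𝓝[>] 0) (𝓝 0) := by
      have := (tendsto_id.mul_const R : Tendsto (fun t : ℝ => t * R) (𝓝 0) (𝓝 (0 * R)))
      rw [zero_mul] at this
      exact this.mono_left nhdsWithin_le_nhds
    have hev : ∀ᶠ t in 𝓝[>] (0:ℝ), 0 < t ∧ t * R < η ∧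
        1 - δ < μ (Z ∩ closedBall x (t * R)) / μ (closedBall x (t * R)) := by
      have h1 : ∀ᶠ t in 𝓝[>] (0:ℝ), 0 < t := eventually_mem_nhdsWithin
      have h2 : ∀ᶠ t in 𝓝[>] (0:ℝ), t * R < η := hmul0.eventually (eventually_lt_nhds hη)
      have h3 : ∀ᶠ t in 𝓝[>] (0:ℝ),
          1 - δ < μ (Z ∩ closedBall x (t * R)) / μ (closedBall x (t * R)) := by
        have htR : Tendsto (fun t : ℝ => t * R) (𝓝[>] 0) (𝓝[>] 0) := by
          apply tendsto_nhdsWithin_of_tendsto_nhds_of_eventually_within _ hmul0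
          filter_upwards [eventually_mem_nhdsWithin] with t (ht : 0 < t)
          exact mul_pos ht hRpos
        exact (hd.comp htR).eventually_const_lt
          (ENNReal.sub_lt_self ENNReal.one_ne_top one_ne_zero hδpos.ne')
      filter_upwards [h1, h2, h3] with t ht1 ht2 ht3 using ⟨ht1, ht2, ht3⟩
    obtain ⟨t, ht, htη, htd⟩ := hev.exists
    have hz : ∃ z ∈ Z, z ∈ closedBall (x + t • v) (ε * t) := by
      by_contra hcon
      push_neg at hcon
      have hdisj : Z ∩ closedBall x (t * R) ⊆
          closedBall x (t * R) \ closedBall (x + t • v) (ε * t) := by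
        rintro z ⟨hzZ, hzB⟩
        exact ⟨hzB, fun hzb => hcon z hzZ hzb⟩
      have hdistc : dist (x + t • v) x = t * ‖v‖ := by
        rw [dist_eq_norm]; simp [norm_smul, abs_of_pos ht]
      have hsub : closedBall (x + t • v) (ε * t) ⊆ closedBall x (t * R) := by
        intro z hzb
        have htri : dist z x ≤ dist z (x + t • v) + dist (x + t • v) x := dist_triangle _ _ _
        rw [mem_closedBall] at hzb ⊢
        rw [hR]; nlinarith
      have hμsmall : μ (closedBall (x + t • v) (ε * t)) =
          ENNReal.ofReal ((ε * t) ^ Module.finrank ℝ E) * μ (ball 0 1) :=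
        Measure.addHaar_closedBall μ _ (by positivity)
      have hμbig : μ (closedBall x (t * R)) =
          ENNReal.ofReal ((t * R) ^ Module.finrank ℝ E) * μ (ball 0 1) :=
        Measure.addHaar_closedBall μ _ (mul_pos ht hRpos).le
      have hbig_ne0 : μ (closedBall x (t * R)) ≠ 0 :=
        (measure_closedBall_pos μ x (mul_pos ht hRpos)).ne'
      have hbig_netop : μ (closedBall x (t * R)) ≠ ⊤ := measure_closedBall_lt_top.ne
      have hmono : μ (Z ∩ closedBall x (t * R)) ≤
          μ (closedBall x (t * R) \ closedBall (x + t • v) (ε * t)) := measure_mono hdisj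
      have hdiff : μ (closedBall x (t * R) \ closedBall (x + t • v) (ε * t)) ≤
          μ (closedBall x (t * R)) - μ (closedBall (x + t • v) (ε * t)) := by
        rw [measure_diff hsub measurableSet_closedBall.nullMeasurableSet
          measure_closedBall_lt_top.ne]
      have hratio : μ (closedBall (x + t • v) (ε * t)) =
          δ * μ (closedBall x (t * R)) := by
        rw [hμsmall, hμbig, hδ, ← mul_assoc, ← ENNReal.ofReal_mul (by positivity)]
        congr 2
        rw [← mul_pow]
        congr 1
        field_simp
      have hub : μ (Z ∩ closedBall x (t * R)) / μ (closedBall x (t * R)) ≤ 1 - δ := by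
        calc μ (Z ∩ closedBall x (t * R)) / μ (closedBall x (t * R))
            ≤ (μ (closedBall x (t * R)) - δ * μ (closedBall x (t * R))) /
              μ (closedBall x (t * R)) := by
              apply ENNReal.div_le_div_right
              refine le_trans hmono (le_trans hdiff ?_)
              rw [hratio]
          _ = 1 - δ := by
              rw [ENNReal.sub_div (fun _ _ => hbig_ne0), ENNReal.div_self hbig_ne0 hbig_netop,
                mul_div_assoc, ENNReal.div_self hbig_ne0 hbig_netop, mul_one]
      exact absurd htd (not_lt.2 hub)
    obtain ⟨z, hzZ, hzb⟩ := hz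
    have hdistc : dist (x + t • v) x = t * ‖v‖ := by
      rw [dist_eq_norm]; simp [norm_smul, abs_of_pos ht]
    have hznear : dist z x < η := by
      rw [mem_closedBall] at hzb
      have htri : dist z x ≤ dist z (x + t • v) + dist (x + t • v) x := dist_triangle _ _ _
      have hle : dist z x ≤ t * R := by rw [hR]; nlinarith
      linarith
    have hest := hball hznear
    rw [hgx, hZg z hzZ] at hest
    simp only [sub_zero, zero_sub, norm_neg] at hest
    have h1 : |A (z - x)| ≤ ε * ‖z - x‖ := by simpa using hest
    have h2 : ‖z - x‖ ≤ t * R := by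
      rw [← dist_eq_norm]
      rw [mem_closedBall] at hzb
      have htri := dist_triangle z (x + t • v) x
      rw [hR]; nlinarith
    have h3 : |A (t • v) - A (z - x)| ≤ ‖A‖ * (ε * t) := by
      rw [(map_sub A (t • v) (z - x)).symm]
      calc |A (t • v - (z - x))| ≤ ‖A‖ * ‖t • v - (z - x)‖ := A.le_opNorm _
        _ ≤ ‖A‖ * (ε * t) := by
            apply mul_le_mul_of_nonneg_left _ (norm_nonneg A)
            rw [mem_closedBall, dist_eq_norm] at hzb
            calc ‖t • v - (z - x)‖ = ‖z - (x + t • v)‖ := by rw [← norm_neg]; congr 1; abel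
              _ ≤ ε * t := hzb
    have h4 : |A (t • v)| ≤ ε * (t * R) + ‖A‖ * (ε * t) := by
      calc |A (t • v)| = |A (z - x) + (A (t • v) - A (z - x))| := by ring_nf
        _ ≤ |A (z - x)| + |A (t • v) - A (z - x)| := abs_add_le _ _
        _ ≤ ε * ‖z - x‖ + ‖A‖ * (ε * t) := by linarith
        _ ≤ ε * (t * R) + ‖A‖ * (ε * t) := by nlinarith
    have h5 : A (t • v) = t * A v := by
      rw [ContinuousLinearMap.map_smul, smul_eq_mul]
    rw [h5, abs_mul, abs_of_pos ht] at h4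
    have h6 : |A v| ≤ ε * R + ‖A‖ * ε := by
      have := (mul_le_mul_iff_right₀ ht).1 (by linarith : t * |A v| ≤ t * (ε * R + ‖A‖ * ε))
      linarith
    rw [hR] at h6
    nlinarith [hε.le, norm_nonneg v, norm_nonneg A]
  have hC : (0:ℝ) < ‖v‖ + 1 + ‖A‖ := by positivity
  have htend : Tendsto (fun ε : ℝ => ε * (‖v‖ + 1 + ‖A‖)) (𝓝[>] 0) (𝓝 0) := by
    have := (tendsto_id.mul_const (‖v‖ + 1 + ‖A‖) :
      Tendsto (fun ε : ℝ => ε * (‖v‖ + 1 + ‖A‖)) (𝓝 0) (𝓝 (0 * (‖v‖ + 1 + ‖A‖))))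
    rw [zero_mul] at this
    exact this.mono_left nhdsWithin_le_nhds
  have hle : |A v| ≤ 0 := by
    refine ge_of_tendsto htend ?_
    filter_upwards [eventually_mem_nhdsWithin,
      (eventually_lt_nhds (by norm_num : (0:ℝ) < 1)).filter_mono nhdsWithin_le_nhds] with
      ε (hε : 0 < ε) hε1
    exact key ε hε hε1
  exact abs_eq_zero.1 (le_antisymm hle (abs_nonneg _))

lemma hasFDerivAt_relu_comp_zero {p : E → ℝ} {x : E}
    (hp : HasFDerivAt p (0 : E →L[ℝ] ℝ) x) (h0 : p x = 0) :
    HasFDerivAt (fun y => relu (p y)) (0 : E →L[ℝ] ℝ) x := by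
  rw [hasFDerivAt_iff_isLittleO_nhds_zero] at hp ⊢
  simp only [ContinuousLinearMap.zero_apply, sub_zero, h0] at hp ⊢
  have hO : (fun h : E => relu (p (x + h)) - relu (p x)) =O[𝓝 0] fun h => p (x + h) - p x :=
    Asymptotics.isBigO_of_le _ fun h => by
      simpa [Real.norm_eq_abs] using relu_lip (p (x + h)) (p x)
  simp only [h0, relu, max_self, max_eq_left le_rfl, sub_zero] at hO ⊢
  have h0' : relu (p x) = 0 := by simp [relu, h0]
  calc (fun h : E => relu (p (x + h))) =O[𝓝 0] fun h => p (x + h) := by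
        refine Asymptotics.isBigO_of_le _ fun h => ?_
        have := relu_lip (p (x + h)) (p x)
        rw [h0', h0] at this
        simpa [Real.norm_eq_abs] using this
    _ =o[𝓝 0] fun h => h := hp

lemma norm_fderiv_relu_comp_le {p : E → ℝ} {x : E}
    (hp : DifferentiableAt ℝ p x) (hr : DifferentiableAt ℝ (fun y => relu (p y)) x) :
    ‖fderiv ℝ (fun y => relu (p y)) x‖ ≤ ‖fderiv ℝ p x‖ := by
  refine ContinuousLinearMap.opNorm_le_bound _ (norm_nonneg _) fun v => ?_
  have key : |fderiv ℝ (fun y => relu (p y)) x v| ≤ |fderiv ℝ p x v| := by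
    have hline : HasDerivAt (fun t : ℝ => x + t • v) v 0 := by
      simpa using ((hasDerivAt_id (0:ℝ)).smul_const v).const_add x
    have hp' : HasDerivAt (fun t : ℝ => p (x + t • v)) (fderiv ℝ p x v) 0 :=
      hp.hasFDerivAt.comp_hasDerivAt_of_eq _ hline (by simp)
    have hr' : HasDerivAt (fun t : ℝ => relu (p (x + t • v)))
        (fderiv ℝ (fun y => relu (p y)) x v) 0 :=
      hr.hasFDerivAt.comp_hasDerivAt_of_eq _ hline (by simp)
    rw [hasDerivAt_iff_tendsto_slope] at hp' hr'
    have habs_p : Tendsto (fun t => |slope (fun t : ℝ => p (x + t • v)) 0 t|) (𝓝[≠] 0)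
        (𝓝 |fderiv ℝ p x v|) := hp'.abs
    have habs_r : Tendsto (fun t => |slope (fun t : ℝ => relu (p (x + t • v))) 0 t|) (𝓝[≠] 0)
        (𝓝 |fderiv ℝ (fun y => relu (p y)) x v|) := hr'.abs
    refine le_of_tendsto_of_tendsto habs_r habs_p ?_
    filter_upwards with t
    rcases eq_or_ne t 0 with rfl | ht
    · simp [slope_def_field]
    · rw [slope_def_field, slope_def_field, abs_div, abs_div]
      refine (div_le_div_iff_of_pos_right (abs_pos.2 (sub_ne_zero.2 ht))).2 ?_
      exact relu_lip (p (x + t • v)) (p (x + (0:ℝ) • v))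
  calc |fderiv ℝ (fun y => relu (p y)) x v| ≤ |fderiv ℝ p x v| := key
    _ ≤ ‖fderiv ℝ p x‖ * ‖v‖ := (fderiv ℝ p x).le_opNorm v

/-- The key one-unit step lemma. -/
lemma relu_step {q : E → ℝ} {qm : ℕ → E → ℝ} {x : E} {B : E →L[ℝ] ℝ} {Bm : ℕ → E →L[ℝ] ℝ}
    (hq : HasFDerivAt q B x) (hqm : ∀ m, HasFDerivAt (qm m) (Bm m) x)
    (hrm : ∀ m, DifferentiableAt ℝ (fun y => relu (qm m y)) x)
    (hval : Tendsto (fun m => qm m x) atTop (𝓝 (q x)))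
    (hder : Tendsto Bm atTop (𝓝 B))
    (hzero : q x = 0 → B = 0) :
    DifferentiableAt ℝ (fun y => relu (q y)) x ∧
      Tendsto (fun m => fderiv ℝ (fun y => relu (qm m y)) x) atTop
        (𝓝 (fderiv ℝ (fun y => relu (q y)) x)) := by
  rcases lt_trichotomy (q x) 0 with hneg | hzero' | hpos
  · have hev : (fun y => relu (q y)) =ᶠ[𝓝 x] fun _ => (0:ℝ) := by
      filter_upwards [hq.continuousAt.eventually_lt continuousAt_const hneg] with y hy
      simp [relu, max_eq_right hy.le]
    have hdiff : DifferentiableAt ℝ (fun y => relu (q y)) x :=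
      (differentiableAt_const (0:ℝ)).congr_of_eventuallyEq hev
    have hfd : fderiv ℝ (fun y => relu (q y)) x = 0 := by
      rw [hev.fderiv_eq, fderiv_fun_const]
      rfl
    refine ⟨hdiff, ?_⟩
    rw [hfd]
    have hevm : ∀ᶠ m in atTop, fderiv ℝ (fun y => relu (qm m y)) x = 0 := by
      filter_upwards [hval.eventually_lt tendsto_const_nhds hneg] with m hm
      have hev' : (fun y => relu (qm m y)) =ᶠ[𝓝 x] fun _ => (0:ℝ) := by
        filter_upwards [(hqm m).continuousAt.eventually_lt continuousAt_const hm] with y hy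
        simp [relu, max_eq_right hy.le]
      rw [hev'.fderiv_eq, fderiv_fun_const]
      rfl
    exact tendsto_const_nhds.congr' (by filter_upwards [hevm] with m hm using hm.symm)
  · have hB0 : B = 0 := hzero hzero'
    rw [hB0] at hq
    have hdiff : HasFDerivAt (fun y => relu (q y)) (0 : E →L[ℝ] ℝ) x :=
      hasFDerivAt_relu_comp_zero hq hzero'
    refine ⟨hdiff.differentiableAt, ?_⟩
    rw [hdiff.fderiv]
    refine squeeze_zero_norm (a := fun m => ‖Bm m‖) (fun m => ?_) ?_
    · calc ‖fderiv ℝ (fun y => relu (qm m y)) x‖ ≤ ‖fderiv ℝ (qm m) x‖ :=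
            norm_fderiv_relu_comp_le (hqm m).differentiableAt (hrm m)
        _ = ‖Bm m‖ := by rw [(hqm m).fderiv]
    · have := hder.norm
      rw [hB0, norm_zero] at this
      exact this
  · have hev : (fun y => relu (q y)) =ᶠ[𝓝 x] q := by
      filter_upwards [continuousAt_const.eventually_lt hq.continuousAt hpos] with y hy
      simp [relu, max_eq_left hy.le]
    have hdiff : DifferentiableAt ℝ (fun y => relu (q y)) x :=
      hq.differentiableAt.congr_of_eventuallyEq hev
    have hfd : fderiv ℝ (fun y => relu (q y)) x = B := by
      rw [hev.fderiv_eq, hq.fderiv]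
    refine ⟨hdiff, ?_⟩
    rw [hfd]
    have hevm : ∀ᶠ m in atTop, fderiv ℝ (fun y => relu (qm m y)) x = Bm m := by
      filter_upwards [tendsto_const_nhds.eventually_lt hval hpos] with m hm
      have hev' : (fun y => relu (qm m y)) =ᶠ[𝓝 x] qm m := by
        filter_upwards [continuousAt_const.eventually_lt (hqm m).continuousAt hm] with y hy
        simp [relu, max_eq_left hy.le]
      rw [hev'.fderiv_eq, (hqm m).fderiv]
    exact hder.congr' (by filter_upwards [hevm] with m hm using hm.symm)

lemma lipschitzWith_pi' {α : Type*} [PseudoEMetricSpace α] {ι : Type*} [Fintype ι]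
    {f : α → ι → ℝ} {K : ℝ≥0} (h : ∀ i, LipschitzWith K fun x => f x i) :
    LipschitzWith K f := fun x y => edist_pi_le_iff.2 fun i => h i x y

/-- Each layer of a ReLU network is Lipschitz. -/
lemma hiddenNet_lipschitz (dims : ℕ → ℕ)
    (w : ∀ l : ℕ, (Fin (dims l) → ℝ) →L[ℝ] (Fin (dims (l + 1)) → ℝ))
    (β : ∀ l : ℕ, Fin (dims (l + 1)) → ℝ) (k : ℕ) :
    ∃ K : ℝ≥0, LipschitzWith K (hiddenNet relu dims w β k) := by
  induction k with
  | zero => exact ⟨1, LipschitzWith.id⟩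
  | succ k ih =>
    obtain ⟨K, hK⟩ := ih
    refine ⟨1 * (1 * (1 * (‖w k‖₊ * K))), ?_⟩
    show LipschitzWith _ fun z i => relu ((w k (hiddenNet relu dims w β k z) + β k) i)
    apply lipschitzWith_pi'
    intro i
    have h1 : LipschitzWith (1 * (‖w k‖₊ * K)) fun z => w k (hiddenNet relu dims w β k z) + β k :=
      (isometry_add_right (β k)).lipschitz.comp ((w k).lipschitz.comp hK)
    have h2 : LipschitzWith 1 fun v : Fin (dims (k+1)) → ℝ => v i :=
      LipschitzWith.eval i
    exact lipschitzWith_relu.comp (h2.comp h1)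

lemma tendsto_clm_apply' {Am : ℕ → E →L[ℝ] F} {A : E →L[ℝ] F} {zm : ℕ → E} {z : E}
    (hA : Tendsto Am atTop (𝓝 A)) (hz : Tendsto zm atTop (𝓝 z)) :
    Tendsto (fun m => Am m (zm m)) atTop (𝓝 (A z)) := by
  have hc := (isBoundedBilinearMap_apply (𝕜 := ℝ) (E := E) (F := F)).continuous
  exact (hc.tendsto (A, z)).comp (hA.prodMk_nhds hz)

lemma tendsto_clm_comp' {Am : ℕ → F →L[ℝ] G} {A : F →L[ℝ] G} {Bm : ℕ → E →L[ℝ] F}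
    {B : E →L[ℝ] F} (hA : Tendsto Am atTop (𝓝 A)) (hB : Tendsto Bm atTop (𝓝 B)) :
    Tendsto (fun m => (Am m).comp (Bm m)) atTop (𝓝 (A.comp B)) := by
  have hc := (isBoundedBilinearMap_comp (𝕜 := ℝ) (E := E) (F := F) (G := G)).continuous
  exact (hc.tendsto (A, B)).comp (hA.prodMk_nhds hB)

lemma tendsto_clm_pi' {ι : Type*} [Fintype ι] {Am : ℕ → ι → E →L[ℝ] ℝ} {A : ι → E →L[ℝ] ℝ}
    (h : ∀ i, Tendsto (fun m => Am m i) atTop (𝓝 (A i))) :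
    Tendsto (fun m => ContinuousLinearMap.pi (Am m)) atTop (𝓝 (ContinuousLinearMap.pi A)) := by
  rw [tendsto_iff_dist_tendsto_zero]
  have hb : ∀ m, dist (ContinuousLinearMap.pi (Am m)) (ContinuousLinearMap.pi A) ≤
      ∑ i, dist (Am m i) (A i) := by
    intro m
    rw [dist_eq_norm]
    have heq : ContinuousLinearMap.pi (Am m) - ContinuousLinearMap.pi A =
        ContinuousLinearMap.pi (fun i => Am m i - A i) := by
      ext v i
      simp
    rw [heq]
    refine ContinuousLinearMap.opNorm_le_bound _
      (Finset.sum_nonneg fun i _ => dist_nonneg) fun v => ?_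
    rw [pi_norm_le_iff_of_nonneg (by positivity)]
    intro i
    calc ‖(ContinuousLinearMap.pi (fun i => Am m i - A i)) v i‖
        = ‖(Am m i - A i) v‖ := rfl
      _ ≤ ‖Am m i - A i‖ * ‖v‖ := (Am m i - A i).le_opNorm v
      _ ≤ (∑ j, dist (Am m j) (A j)) * ‖v‖ := by
          apply mul_le_mul_of_nonneg_right _ (norm_nonneg v)
          rw [← dist_eq_norm]
          exact Finset.single_le_sum (fun j _ => dist_nonneg) (Finset.mem_univ i)
  refine squeeze_zero (fun m => dist_nonneg) hb ?_
  have h' : Tendsto (fun m => ∑ i, dist (Am m i) (A i)) atTop (𝓝 (∑ _i : ι, (0:ℝ))) := by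
    apply tendsto_finset_sum
    intro i _
    exact tendsto_iff_dist_tendsto_zero.1 (h i)
  simpa using h'

end Aux

section Net

variable (dims : ℕ → ℕ)
  (w : ℕ → ∀ l : ℕ, (Fin (dims l) → ℝ) →L[ℝ] (Fin (dims (l + 1)) → ℝ))
  (β : ℕ → ∀ l : ℕ, Fin (dims (l + 1)) → ℝ)
  (wlim : ∀ l : ℕ, (Fin (dims l) → ℝ) →L[ℝ] (Fin (dims (l + 1)) → ℝ))
  (βlim : ∀ l : ℕ, Fin (dims (l + 1)) → ℝ)

/-- Pointwise convergence of the hidden layers under parameter convergence. -/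
lemma hiddenNet_tendsto_apply
    (hw : ∀ l, Filter.Tendsto (fun m => w m l) Filter.atTop (𝓝 (wlim l)))
    (hβ : ∀ l, Filter.Tendsto (fun m => β m l) Filter.atTop (𝓝 (βlim l)))
    (k : ℕ) (x : Fin (dims 0) → ℝ) :
    Tendsto (fun m => hiddenNet relu dims (w m) (β m) k x) atTop
      (𝓝 (hiddenNet relu dims wlim βlim k x)) := by
  induction k with
  | zero => exact tendsto_const_nhds
  | succ k ih =>
    show Tendsto
      (fun m => fun i => relu ((w m k (hiddenNet relu dims (w m) (β m) k x) + β m k) i)) atTop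
      (𝓝 (fun i => relu ((wlim k (hiddenNet relu dims wlim βlim k x) + βlim k) i)))
    rw [tendsto_pi_nhds]
    intro i
    have h1 : Tendsto (fun m => w m k (hiddenNet relu dims (w m) (β m) k x)) atTop
        (𝓝 (wlim k (hiddenNet relu dims wlim βlim k x))) := tendsto_clm_apply' (hw k) ih
    have h2 := h1.add (hβ k)
    have h3 := ((continuous_apply i).tendsto _).comp h2
    exact (lipschitzWith_relu.continuous.tendsto _).comp h3

end Net

set_option maxHeartbeats 1000000

/-- for ReLU networks on a bounded set `U`, the map
`θ ↦ ‖∇N_θ‖_{L^∞(U)}` is sequentially lower semicontinuous w.r.t. parameter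
convergence: if `θ^m → θ` then
`‖∇N_θ‖_{L^∞(U)} ≤ liminf_m ‖∇N_{θ^m}‖_{L^∞(U)}`.
Here `∇N_θ` is the a.e. defined gradient (ReLU networks are Lipschitz, hence
differentiable a.e. by Rademacher) and the `L^∞` norm is the essential supremum. -/
theorem reluNet_gradient_norm_lsc (dims : ℕ → ℕ) (L : ℕ) (hL : 1 ≤ L)
    (U : Set (Fin (dims 0) → ℝ)) (hUb : Bornology.IsBounded U)
    (w : ℕ → ∀ l : ℕ, (Fin (dims l) → ℝ) →L[ℝ] (Fin (dims (l + 1)) → ℝ))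
    (β : ℕ → ∀ l : ℕ, Fin (dims (l + 1)) → ℝ)
    (wlim : ∀ l : ℕ, (Fin (dims l) → ℝ) →L[ℝ] (Fin (dims (l + 1)) → ℝ))
    (βlim : ∀ l : ℕ, Fin (dims (l + 1)) → ℝ)
    (hw : ∀ l, Filter.Tendsto (fun m => w m l) Filter.atTop (𝓝 (wlim l)))
    (hβ : ∀ l, Filter.Tendsto (fun m => β m l) Filter.atTop (𝓝 (βlim l))) :
    eLpNorm (fun x => ‖fderiv ℝ (fullNet relu dims wlim βlim L) x‖) ∞
        (volume.restrict U) ≤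
      Filter.liminf
        (fun m => eLpNorm (fun x => ‖fderiv ℝ (fullNet relu dims (w m) (β m) L) x‖) ∞
          (volume.restrict U)) Filter.atTop := by
  classical
  -- Rademacher: a.e. point is a differentiability point of every network in sight
  have hradm : ∀ᵐ x : (Fin (dims 0) → ℝ), ∀ m k, DifferentiableAt ℝ (hiddenNet relu dims (w m) (β m) k) x := by
    rw [MeasureTheory.ae_all_iff]
    intro m
    rw [MeasureTheory.ae_all_iff]
    intro k
    obtain ⟨K, hK⟩ := hiddenNet_lipschitz dims (w m) (β m) k
    exact hK.ae_differentiableAt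
  -- main induction: a.e. differentiability of the limit and convergence of the gradients
  have key : ∀ k : ℕ, ∀ᵐ x : (Fin (dims 0) → ℝ),
      DifferentiableAt ℝ (hiddenNet relu dims wlim βlim k) x ∧
      Tendsto (fun m => fderiv ℝ (hiddenNet relu dims (w m) (β m) k) x) atTop
        (𝓝 (fderiv ℝ (hiddenNet relu dims wlim βlim k) x)) := by
    intro k
    induction k with
    | zero =>
      refine Filter.Eventually.of_forall fun x => ⟨differentiableAt_id, ?_⟩
      have h1 : ∀ (w' : ∀ l : ℕ, (Fin (dims l) → ℝ) →L[ℝ] (Fin (dims (l + 1)) → ℝ))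
          (β' : ∀ l : ℕ, Fin (dims (l + 1)) → ℝ),
          fderiv ℝ (hiddenNet relu dims w' β' 0) x = ContinuousLinearMap.id ℝ (Fin (dims 0) → ℝ) := by
        intro w' β'
        show fderiv ℝ (id : (Fin (dims 0) → ℝ) → (Fin (dims 0) → ℝ)) x = _
        exact fderiv_id
      simp only [h1]
      exact tendsto_const_nhds
    | succ k ih =>
      -- notation
      set H : (Fin (dims 0) → ℝ) → (Fin (dims k) → ℝ) := hiddenNet relu dims wlim βlim k with hH
      -- density points of the zero sets of the limit preactivations
      have hHcont : Continuous H := by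
        obtain ⟨K, hK⟩ := hiddenNet_lipschitz dims wlim βlim k
        exact hK.continuous
      have hZ : ∀ i : Fin (dims (k+1)), ∀ᵐ x : (Fin (dims 0) → ℝ),
          (wlim k (H x) + βlim k) i = 0 →
          Tendsto (fun r => volume (((fun z => (wlim k (H z) + βlim k) i) ⁻¹' {0} ∩
              closedBall x r)) / volume (closedBall x r)) (𝓝[>] 0) (𝓝 1) := by
        intro i
        set g : (Fin (dims 0) → ℝ) → ℝ := fun z => (wlim k (H z) + βlim k) i with hg
        have hgcont : Continuous g := by
          apply (continuous_apply i).comp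
          exact ((wlim k).continuous.comp hHcont).add continuous_const
        have hZclosed : IsClosed (g ⁻¹' {0}) := isClosed_singleton.preimage hgcont
        filter_upwards [Besicovitch.ae_tendsto_measure_inter_div_of_measurableSet volume
          hZclosed.measurableSet] with x hx h0
        have hxZ : x ∈ g ⁻¹' {0} := h0
        rw [Set.indicator_of_mem hxZ] at hx
        exact hx
      rw [← MeasureTheory.ae_all_iff] at hZ
      filter_upwards [ih, hradm, hZ] with x hx hm hz
      obtain ⟨hdiff, htend⟩ := hx
      set D := fderiv ℝ H x with hD
      -- the limit preactivation
      have hpre : HasFDerivAt (fun z => wlim k (H z) + βlim k) ((wlim k).comp D) x :=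
        ((wlim k).hasFDerivAt.comp x hdiff.hasFDerivAt).add_const (βlim k)
      -- the approximating preactivations
      have hprem : ∀ m, HasFDerivAt (fun z => w m k (hiddenNet relu dims (w m) (β m) k z) + β m k)
          ((w m k).comp (fderiv ℝ (hiddenNet relu dims (w m) (β m) k) x)) x := fun m =>
        ((w m k).hasFDerivAt.comp x (hm m k).hasFDerivAt).add_const (β m k)
      -- per-component facts
      have comp : ∀ i : Fin (dims (k+1)),
          DifferentiableAt ℝ (fun z => relu ((wlim k (H z) + βlim k) i)) x ∧
          Tendsto (fun m => fderiv ℝ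
              (fun z => relu ((w m k (hiddenNet relu dims (w m) (β m) k z) + β m k) i)) x) atTop
            (𝓝 (fderiv ℝ (fun z => relu ((wlim k (H z) + βlim k) i)) x)) := by
        intro i
        have hq0 := ((ContinuousLinearMap.proj i :
            (∀ _ : Fin (dims (k+1)), ℝ) →L[ℝ] ℝ)).hasFDerivAt.comp x hpre
        have hq : HasFDerivAt (fun z => (wlim k (H z) + βlim k) i)
            ((ContinuousLinearMap.proj i).comp ((wlim k).comp D)) x := hq0
        have hqm : ∀ m, HasFDerivAt
            (fun z => (w m k (hiddenNet relu dims (w m) (β m) k z) + β m k) i)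
            ((ContinuousLinearMap.proj i).comp
              ((w m k).comp (fderiv ℝ (hiddenNet relu dims (w m) (β m) k) x))) x := fun m =>
          ((ContinuousLinearMap.proj i :
            (∀ _ : Fin (dims (k+1)), ℝ) →L[ℝ] ℝ)).hasFDerivAt.comp x (hprem m)
        have hrm : ∀ m, DifferentiableAt ℝ
            (fun z => relu ((w m k (hiddenNet relu dims (w m) (β m) k z) + β m k) i)) x := by
          intro m
          have := hm m (k+1)
          exact differentiableAt_pi.1 this i
        have hval : Tendsto
            (fun m => (w m k (hiddenNet relu dims (w m) (β m) k x) + β m k) i) atTop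
            (𝓝 ((wlim k (H x) + βlim k) i)) := by
          have h1 : Tendsto (fun m => w m k (hiddenNet relu dims (w m) (β m) k x)) atTop
              (𝓝 (wlim k (H x))) :=
            tendsto_clm_apply' (hw k) (hiddenNet_tendsto_apply dims w β wlim βlim hw hβ k x)
          exact ((continuous_apply i).tendsto _).comp (h1.add (hβ k))
        have hder : Tendsto (fun m => (ContinuousLinearMap.proj i).comp
              ((w m k).comp (fderiv ℝ (hiddenNet relu dims (w m) (β m) k) x))) atTop
            (𝓝 ((ContinuousLinearMap.proj i).comp ((wlim k).comp D))) :=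
          tendsto_clm_comp' tendsto_const_nhds (tendsto_clm_comp' (hw k) htend)
        have hzero : (wlim k (H x) + βlim k) i = 0 →
            (ContinuousLinearMap.proj i).comp ((wlim k).comp D) = 0 := by
          intro h0
          exact hasFDerivAt_zero_of_density_point
            (g := fun z => (wlim k (H z) + βlim k) i)
            (Z := (fun z => (wlim k (H z) + βlim k) i) ⁻¹' {0})
            (fun z hz => hz) h0 (hz i h0) hq
        exact relu_step hq hqm hrm hval hder hzero
      constructor
      · show DifferentiableAt ℝ (fun z i => relu ((wlim k (H z) + βlim k) i)) x
        exact differentiableAt_pi.2 fun i => (comp i).1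
      · show Tendsto (fun m => fderiv ℝ
            (fun z i => relu ((w m k (hiddenNet relu dims (w m) (β m) k z) + β m k) i)) x) atTop
          (𝓝 (fderiv ℝ (fun z i => relu ((wlim k (H z) + βlim k) i)) x))
        have heq : ∀ m, fderiv ℝ
            (fun z i => relu ((w m k (hiddenNet relu dims (w m) (β m) k z) + β m k) i)) x =
            ContinuousLinearMap.pi (fun i => fderiv ℝ
              (fun z => relu ((w m k (hiddenNet relu dims (w m) (β m) k z) + β m k) i)) x) := by
          intro m
          exact fderiv_pi fun i => differentiableAt_pi.1 (hm m (k+1)) i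
        have heq' : fderiv ℝ (fun z i => relu ((wlim k (H z) + βlim k) i)) x =
            ContinuousLinearMap.pi (fun i => fderiv ℝ
              (fun z => relu ((wlim k (H z) + βlim k) i)) x) :=
          fderiv_pi fun i => (comp i).1
        simp only [heq, heq']
        exact tendsto_clm_pi' fun i => (comp i).2
  -- conclude for the full networks
  have hfull : ∀ᵐ x : (Fin (dims 0) → ℝ),
      Tendsto (fun m => (‖fderiv ℝ (fullNet relu dims (w m) (β m) L) x‖₊ : ℝ≥0∞)) atTop
        (𝓝 (‖fderiv ℝ (fullNet relu dims wlim βlim L) x‖₊ : ℝ≥0∞)) := by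
    filter_upwards [key (L - 1), hradm] with x hx hm
    obtain ⟨hdiff, htend⟩ := hx
    have hN : HasFDerivAt (fullNet relu dims wlim βlim L)
        ((wlim (L-1)).comp (fderiv ℝ (hiddenNet relu dims wlim βlim (L-1)) x)) x :=
      ((wlim (L-1)).hasFDerivAt.comp x hdiff.hasFDerivAt).add_const (βlim (L-1))
    have hNm : ∀ m, fderiv ℝ (fullNet relu dims (w m) (β m) L) x =
        (w m (L-1)).comp (fderiv ℝ (hiddenNet relu dims (w m) (β m) (L-1)) x) := fun m =>
      (((w m (L-1)).hasFDerivAt.comp x (hm m (L-1)).hasFDerivAt).add_const (β m (L-1))).fderiv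
    have hconv : Tendsto (fun m => fderiv ℝ (fullNet relu dims (w m) (β m) L) x) atTop
        (𝓝 (fderiv ℝ (fullNet relu dims wlim βlim L) x)) := by
      rw [hN.fderiv]
      simp only [hNm]
      exact tendsto_clm_comp' (hw (L-1)) htend
    exact (ENNReal.tendsto_coe.2 hconv.nnnorm)
  -- per-m essential sup bound
  have hbound : ∀ m : ℕ, ∀ᵐ x ∂(volume.restrict U),
      (‖fderiv ℝ (fullNet relu dims (w m) (β m) L) x‖₊ : ℝ≥0∞) ≤
        eLpNorm (fun x => ‖fderiv ℝ (fullNet relu dims (w m) (β m) L) x‖) ∞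
          (volume.restrict U) := by
    intro m
    have h := MeasureTheory.ae_le_eLpNormEssSup
      (f := fun x => ‖fderiv ℝ (fullNet relu dims (w m) (β m) L) x‖) (μ := volume.restrict U)
    filter_upwards [h] with x hx
    rw [eLpNorm_exponent_top]
    have hx' := hx
    simp [nnnorm_norm] at hx'
    exact hx'
  have hb' : ∀ᵐ x ∂(volume.restrict U), ∀ m : ℕ,
      (‖fderiv ℝ (fullNet relu dims (w m) (β m) L) x‖₊ : ℝ≥0∞) ≤
        eLpNorm (fun x => ‖fderiv ℝ (fullNet relu dims (w m) (β m) L) x‖) ∞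
          (volume.restrict U) := MeasureTheory.ae_all_iff.2 hbound
  rw [eLpNorm_exponent_top, eLpNormEssSup]
  refine essSup_le_of_ae_le _ ?_
  filter_upwards [ae_restrict_of_ae hfull, hb'] with x hx hb
  calc (‖‖fderiv ℝ (fullNet relu dims wlim βlim L) x‖‖₊ : ℝ≥0∞)
      = (‖fderiv ℝ (fullNet relu dims wlim βlim L) x‖₊ : ℝ≥0∞) := by rw [nnnorm_norm]
    _ = Filter.liminf
          (fun m => (‖fderiv ℝ (fullNet relu dims (w m) (β m) L) x‖₊ : ℝ≥0∞)) atTop :=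
        hx.liminf_eq.symm
    _ ≤ Filter.liminf
          (fun m => eLpNorm (fun x => ‖fderiv ℝ (fullNet relu dims (w m) (β m) L) x‖) ∞
            (volume.restrict U)) atTop :=
        Filter.liminf_le_liminf (Filter.Eventually.of_forall hb)
end

section
/- Let σ be Lipschitz continuous with constant L_σ ≥ 1. Then for neural networks N_θ, N_{θ'} with the same architecture and all inputs z, one has |N_θ(z) − N_{θ'}(z)| ≤ M(|z|_1 + C) · Σ_{s=1}^{L} |θ^s − θ'^s|_∞ for suitable constants M, C depending only on bounds for the weights; in particular, the map (θ, z) ↦ N_θ(z) is jointly continuous and locally Lipschitz in θ uniformly for z in bounded sets. -/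
open scoped NNReal

lemma sup_le_sum_abs {n : ℕ} (z : Fin n → ℝ) : ‖z‖ ≤ ∑ i, |z i| := by
  refine (pi_norm_le_iff_of_nonneg (by positivity)).2 fun i => ?_
  rw [Real.norm_eq_abs]
  exact Finset.single_le_sum (f := fun j => |z j|) (fun j _ => abs_nonneg _) (Finset.mem_univ i)

lemma sigma_apply_norm {σ : ℝ → ℝ} {Lσ : ℝ≥0} (hσ : LipschitzWith Lσ σ)
    {n : ℕ} (v : Fin n → ℝ) :
    ‖fun i : Fin n => σ (v i)‖ ≤ Lσ * ‖v‖ + |σ 0| := by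
  refine (pi_norm_le_iff_of_nonneg (by positivity)).2 fun i => ?_
  rw [Real.norm_eq_abs]
  have h1 : |σ (v i) - σ 0| ≤ Lσ * |v i| := by
    have := hσ.dist_le_mul (v i) 0
    simpa [Real.dist_eq, sub_zero] using this
  have h2 : |v i| ≤ ‖v‖ := by
    have := norm_le_pi_norm v i
    simpa [Real.norm_eq_abs] using this
  have h3 : |σ (v i)| ≤ |σ (v i) - σ 0| + |σ 0| := by
    calc |σ (v i)| = |(σ (v i) - σ 0) + σ 0| := by ring_nf
    _ ≤ |σ (v i) - σ 0| + |σ 0| := abs_add_le _ _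
  have hLnn : (0:ℝ) ≤ Lσ := Lσ.coe_nonneg
  nlinarith [mul_le_mul_of_nonneg_left h2 hLnn]

lemma sigma_apply_sub {σ : ℝ → ℝ} {Lσ : ℝ≥0} (hσ : LipschitzWith Lσ σ)
    {n : ℕ} (v v' : Fin n → ℝ) :
    ‖(fun i : Fin n => σ (v i)) - fun i => σ (v' i)‖ ≤ Lσ * ‖v - v'‖ := by
  refine (pi_norm_le_iff_of_nonneg (by positivity)).2 fun i => ?_
  have h1 : |σ (v i) - σ (v' i)| ≤ Lσ * |v i - v' i| := by
    have := hσ.dist_le_mul (v i) (v' i)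
    simpa [Real.dist_eq] using this
  have h2 : |v i - v' i| ≤ ‖v - v'‖ := by
    have := norm_le_pi_norm (v - v') i
    simpa [Real.norm_eq_abs] using this
  have hLnn : (0:ℝ) ≤ Lσ := Lσ.coe_nonneg
  calc ‖((fun i : Fin n => σ (v i)) - fun i => σ (v' i)) i‖ = |σ (v i) - σ (v' i)| := by
        simp [Real.norm_eq_abs]
    _ ≤ Lσ * |v i - v' i| := h1
    _ ≤ Lσ * ‖v - v'‖ := by nlinarith

lemma hiddenNet_succ (σ : ℝ → ℝ) (dims : ℕ → ℕ)
    (w : ∀ l : ℕ, (Fin (dims l) → ℝ) →L[ℝ] (Fin (dims (l + 1)) → ℝ))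
    (β : ∀ l : ℕ, Fin (dims (l + 1)) → ℝ) (k : ℕ) (z : Fin (dims 0) → ℝ) :
    hiddenNet σ dims w β (k + 1) z =
      fun i => σ ((w k (hiddenNet σ dims w β k z) + β k) i) := rfl

set_option maxHeartbeats 1000000 in
/-- for networks with the same architecture, Lipschitz activation `σ`
(constant `Lσ ≥ 1`) and parameters bounded by `R`, there are constants `M, C > 0`
(depending only on the bound `R` for the weights, the architecture and `Lσ`) with
`|N_θ(z) − N_{θ'}(z)| ≤ M (|z|₁ + C) Σ_{s=1}^L |θ^s − θ'^s|_∞` for all inputs `z`;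
in particular `(θ, z) ↦ N_θ(z)` is jointly continuous and locally Lipschitz in `θ`,
uniformly for `z` in bounded sets. -/
theorem neuralNet_param_lipschitz (σ : ℝ → ℝ) (Lσ : ℝ≥0)
    (hσ : LipschitzWith Lσ σ) (hLσ : 1 ≤ Lσ)
    (dims : ℕ → ℕ) (L : ℕ) (hL : 1 ≤ L) (R : ℝ) (hR : 0 < R) :
    ∃ M C : ℝ, 0 < M ∧ 0 < C ∧
      ∀ (w w' : ∀ l : ℕ, (Fin (dims l) → ℝ) →L[ℝ] (Fin (dims (l + 1)) → ℝ))
        (β β' : ∀ l : ℕ, Fin (dims (l + 1)) → ℝ),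
        (∀ l, ‖w l‖ ≤ R) → (∀ l, ‖w' l‖ ≤ R) →
        (∀ l, ‖β l‖ ≤ R) → (∀ l, ‖β' l‖ ≤ R) →
        ∀ z : Fin (dims 0) → ℝ,
          ‖fullNet σ dims w β L z - fullNet σ dims w' β' L z‖ ≤
            M * ((∑ i, |z i|) + C) *
              ∑ s ∈ Finset.range L, (‖w s - w' s‖ + ‖β s - β' s‖) := by
  have hLσ' : (1:ℝ) ≤ Lσ := by exact_mod_cast hLσ
  have hLnn : (0:ℝ) ≤ Lσ := by linarith
  set D : ℝ := Lσ * (R + 1) + |σ 0| + 2 with hDdef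
  have habs : (0:ℝ) ≤ |σ 0| := abs_nonneg _
  have hD1 : (1:ℝ) ≤ D := by nlinarith
  have hDa : Lσ * R ≤ D := by rw [hDdef]; nlinarith
  have hDb : Lσ * R + |σ 0| + 1 ≤ D := by rw [hDdef]; nlinarith
  have hRL : R * Lσ ≤ D := by rw [hDdef]; nlinarith
  have hD0 : (0:ℝ) < D := by linarith
  refine ⟨(1 + R * Lσ) * D ^ (L - 1), 1, by positivity, one_pos, ?_⟩
  intro w w' β β' hw hw' hβ hβ' z
  set Z : ℝ := ‖z‖ + 1 with hZdef
  have hZ1 : (1:ℝ) ≤ Z := by have := norm_nonneg z; linarith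
  have hZ0 : (0:ℝ) < Z := by linarith
  set ε : ℕ → ℝ := fun s => ‖w s - w' s‖ + ‖β s - β' s‖ with hεdef
  have hεnn : ∀ s, 0 ≤ ε s := fun s => add_nonneg (norm_nonneg _) (norm_nonneg _)
  have hSnn : ∀ k, 0 ≤ ∑ s ∈ Finset.range k, ε s :=
    fun k => Finset.sum_nonneg fun s _ => hεnn s
  -- growth bound
  have key1 : ∀ k, ‖hiddenNet σ dims w β k z‖ + 1 ≤ D ^ k * Z := by
    intro k
    induction k with
    | zero => simp [hiddenNet, Z]
    | succ k ih =>
      have hDk : (1:ℝ) ≤ D ^ k := one_le_pow₀ hD1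
      have hu : ‖w k (hiddenNet σ dims w β k z) + β k‖ ≤
          R * ‖hiddenNet σ dims w β k z‖ + R := by
        calc ‖w k (hiddenNet σ dims w β k z) + β k‖
            ≤ ‖w k (hiddenNet σ dims w β k z)‖ + ‖β k‖ := norm_add_le _ _
          _ ≤ ‖w k‖ * ‖hiddenNet σ dims w β k z‖ + R :=
              add_le_add ((w k).le_opNorm _) (hβ k)
          _ ≤ R * ‖hiddenNet σ dims w β k z‖ + R := by
              have := (w k).le_opNorm (hiddenNet σ dims w β k z)
              nlinarith [hw k, norm_nonneg (hiddenNet σ dims w β k z)]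
      have hstep : ‖hiddenNet σ dims w β (k + 1) z‖ ≤
          Lσ * ‖w k (hiddenNet σ dims w β k z) + β k‖ + |σ 0| := by
        rw [hiddenNet_succ]
        exact sigma_apply_norm hσ (w k (hiddenNet σ dims w β k z) + β k)
      have hnn := norm_nonneg (hiddenNet σ dims w β k z)
      have hZnn : (0:ℝ) ≤ Z := le_of_lt hZ0
      calc ‖hiddenNet σ dims w β (k + 1) z‖ + 1
          ≤ Lσ * (R * ‖hiddenNet σ dims w β k z‖ + R) + |σ 0| + 1 := by
            have := mul_le_mul_of_nonneg_left hu hLnn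
            linarith
        _ ≤ D * (‖hiddenNet σ dims w β k z‖ + 1) := by
            nlinarith [mul_le_mul_of_nonneg_right hDa hnn]
        _ ≤ D * (D ^ k * Z) := mul_le_mul_of_nonneg_left ih (le_of_lt hD0)
        _ = D ^ (k + 1) * Z := by ring
  -- difference bound
  have key2 : ∀ k, ‖hiddenNet σ dims w β k z - hiddenNet σ dims w' β' k z‖ ≤
      Lσ * D ^ k * Z * ∑ s ∈ Finset.range k, ε s := by
    intro k
    induction k with
    | zero => simp [hiddenNet]
    | succ k ih =>
      set h := hiddenNet σ dims w β k z with hh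
      set h' := hiddenNet σ dims w' β' k z with hh'
      have hDk : (1:ℝ) ≤ D ^ k := one_le_pow₀ hD1
      have hdiff : ‖(w k h + β k) - (w' k h' + β' k)‖ ≤
          ‖w k - w' k‖ * ‖h‖ + R * ‖h - h'‖ + ‖β k - β' k‖ := by
        have e : (w k h + β k) - (w' k h' + β' k) =
            ((w k - w' k) h + (w' k) (h - h')) + (β k - β' k) := by
          simp [ContinuousLinearMap.sub_apply, map_sub]
          abel
        rw [e]
        calc ‖((w k - w' k) h + (w' k) (h - h')) + (β k - β' k)‖
            ≤ ‖(w k - w' k) h‖ + ‖(w' k) (h - h')‖ + ‖β k - β' k‖ := by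
              exact le_trans (norm_add_le _ _)
                (add_le_add_left (norm_add_le _ _) _)
          _ ≤ ‖w k - w' k‖ * ‖h‖ + R * ‖h - h'‖ + ‖β k - β' k‖ := by
              gcongr
              · exact (w k - w' k).le_opNorm h
              · calc ‖(w' k) (h - h')‖ ≤ ‖w' k‖ * ‖h - h'‖ := (w' k).le_opNorm _
                  _ ≤ R * ‖h - h'‖ := by
                    have := norm_nonneg (h - h'); nlinarith [hw' k]
      have hstep : ‖hiddenNet σ dims w β (k + 1) z - hiddenNet σ dims w' β' (k + 1) z‖ ≤
          Lσ * ‖(w k h + β k) - (w' k h' + β' k)‖ := by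
        rw [hiddenNet_succ, hiddenNet_succ, ← hh, ← hh']
        exact sigma_apply_sub hσ (w k h + β k) (w' k h' + β' k)
      have hb1 : ‖h‖ + 1 ≤ D ^ k * Z := key1 k
      have hnnh := norm_nonneg h
      have hnnd := norm_nonneg (h - h')
      have hwd := norm_nonneg (w k - w' k)
      have hbd := norm_nonneg (β k - β' k)
      have hεk : ε k = ‖w k - w' k‖ + ‖β k - β' k‖ := rfl
      have hSk := hSnn k
      rw [Finset.sum_range_succ]
      have step1 : ‖w k - w' k‖ * ‖h‖ + ‖β k - β' k‖ ≤ ε k * (D ^ k * Z) := by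
        have h1 : ‖w k - w' k‖ * ‖h‖ + ‖β k - β' k‖ ≤ ε k * (‖h‖ + 1) := by
          rw [hεk]; nlinarith
        have h2 : ε k * (‖h‖ + 1) ≤ ε k * (D ^ k * Z) :=
          mul_le_mul_of_nonneg_left hb1 (hεnn k)
        linarith
      have hεknn := hεnn k
      calc ‖hiddenNet σ dims w β (k + 1) z - hiddenNet σ dims w' β' (k + 1) z‖
          ≤ Lσ * (‖w k - w' k‖ * ‖h‖ + R * ‖h - h'‖ + ‖β k - β' k‖) := by
            have := mul_le_mul_of_nonneg_left hdiff hLnn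
            linarith
        _ ≤ Lσ * (ε k * (D ^ k * Z) + R * (Lσ * D ^ k * Z * ∑ s ∈ Finset.range k, ε s)) := by
            have h3 : R * ‖h - h'‖ ≤ R * (Lσ * D ^ k * Z * ∑ s ∈ Finset.range k, ε s) :=
              mul_le_mul_of_nonneg_left ih (le_of_lt hR)
            exact mul_le_mul_of_nonneg_left (by linarith [step1, h3]) hLnn
        _ ≤ Lσ * D ^ (k + 1) * Z * ((∑ s ∈ Finset.range k, ε s) + ε k) := by
            have hDkpos : (0:ℝ) < D ^ k := by positivity
            have hA : Lσ * (ε k * (D ^ k * Z)) ≤ Lσ * D ^ (k+1) * Z * ε k := by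
              have e : D ^ (k+1) = D * D ^ k := by ring
              rw [e]
              have h0 : (0:ℝ) ≤ Lσ * D ^ k * Z * ε k := by positivity
              nlinarith [mul_nonneg h0 (sub_nonneg.2 hD1)]
            have hB : Lσ * (R * (Lσ * D ^ k * Z * ∑ s ∈ Finset.range k, ε s)) ≤
                Lσ * D ^ (k+1) * Z * ∑ s ∈ Finset.range k, ε s := by
              have e : D ^ (k+1) = D * D ^ k := by ring
              rw [e]
              have h0 : (0:ℝ) ≤ Lσ * (Lσ * D ^ k * Z * ∑ s ∈ Finset.range k, ε s) := by
                have := hSnn k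
                positivity
              nlinarith [mul_nonneg h0 (sub_nonneg.2 hRL)]
            nlinarith [hA, hB]
  -- final
  set k := L - 1 with hk
  have hkL : k + 1 = L := Nat.succ_pred_eq_of_pos hL
  set h := hiddenNet σ dims w β k z with hh
  have hkmem : k ∈ Finset.range L := by
    rw [Finset.mem_range]; omega
  set h' := hiddenNet σ dims w' β' k z with hh'
  have hdiff : ‖fullNet σ dims w β L z - fullNet σ dims w' β' L z‖ ≤
      ‖w k - w' k‖ * ‖h‖ + R * ‖h - h'‖ + ‖β k - β' k‖ := by
    have e : fullNet σ dims w β L z - fullNet σ dims w' β' L z =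
        ((w k - w' k) h + (w' k) (h - h')) + (β k - β' k) := by
      simp only [fullNet, ← hk, ← hh, ← hh', ContinuousLinearMap.sub_apply, map_sub]
      abel
    rw [e]
    calc ‖((w k - w' k) h + (w' k) (h - h')) + (β k - β' k)‖
        ≤ ‖(w k - w' k) h‖ + ‖(w' k) (h - h')‖ + ‖β k - β' k‖ :=
          le_trans (norm_add_le _ _) (add_le_add_left (norm_add_le _ _) _)
      _ ≤ ‖w k - w' k‖ * ‖h‖ + R * ‖h - h'‖ + ‖β k - β' k‖ := by
          gcongr
          · exact (w k - w' k).le_opNorm h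
          · calc ‖(w' k) (h - h')‖ ≤ ‖w' k‖ * ‖h - h'‖ := (w' k).le_opNorm _
              _ ≤ R * ‖h - h'‖ := by
                have := norm_nonneg (h - h'); nlinarith [hw' k]
  have hb1 : ‖h‖ + 1 ≤ D ^ k * Z := key1 k
  have hb2 : ‖h - h'‖ ≤ Lσ * D ^ k * Z * ∑ s ∈ Finset.range k, ε s := key2 k
  set S : ℝ := ∑ s ∈ Finset.range L, ε s with hSdef
  have hSnnL : 0 ≤ S := hSnn L
  have hεS : ε k ≤ S :=
    Finset.single_le_sum (f := ε) (fun s _ => hεnn s) hkmem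
  have hsubS : ∑ s ∈ Finset.range k, ε s ≤ S := by
    apply Finset.sum_le_sum_of_subset_of_nonneg
    · exact Finset.range_subset_range.2 (by omega)
    · exact fun s _ _ => hεnn s
  have hDkpos : (0:ℝ) < D ^ k := by positivity
  have hnnh := norm_nonneg h
  have hεknn := hεnn k
  have hwd := norm_nonneg (w k - w' k)
  have hbd := norm_nonneg (β k - β' k)
  have hSknn := hSnn k
  have hsum_ge : ‖z‖ + 1 ≤ (∑ i, |z i|) + 1 := by
    have := sup_le_sum_abs z; linarith
  have main : ‖fullNet σ dims w β L z - fullNet σ dims w' β' L z‖ ≤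
      (1 + R * Lσ) * D ^ k * Z * S := by
    have t1 : ‖w k - w' k‖ * ‖h‖ + ‖β k - β' k‖ ≤ ε k * (D ^ k * Z) := by
      have h1 : ‖w k - w' k‖ * ‖h‖ + ‖β k - β' k‖ ≤ ε k * (‖h‖ + 1) := by
        simp only [hεdef]; nlinarith
      have h2 : ε k * (‖h‖ + 1) ≤ ε k * (D ^ k * Z) :=
        mul_le_mul_of_nonneg_left hb1 hεknn
      linarith
    have t2 : R * ‖h - h'‖ ≤ R * (Lσ * D ^ k * Z * ∑ s ∈ Finset.range k, ε s) :=
      mul_le_mul_of_nonneg_left hb2 (le_of_lt hR)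
    have t3 : ε k * (D ^ k * Z) ≤ D ^ k * Z * S := by
      nlinarith [mul_nonneg (mul_nonneg (le_of_lt hDkpos) (le_of_lt hZ0)) (sub_nonneg.2 hεS)]
    have t4 : R * (Lσ * D ^ k * Z * ∑ s ∈ Finset.range k, ε s) ≤
        R * Lσ * (D ^ k * Z) * S := by
      nlinarith [mul_nonneg (mul_nonneg (mul_nonneg (mul_nonneg (le_of_lt hR) hLnn) (le_of_lt hDkpos)) (le_of_lt hZ0)) (sub_nonneg.2 hsubS)]
    nlinarith [hdiff, t1, t2, t3, t4]
  have final : (1 + R * Lσ) * D ^ k * Z * S ≤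
      (1 + R * Lσ) * D ^ (L - 1) * ((∑ i, |z i|) + 1) * S := by
    have hM0 : (0:ℝ) ≤ (1 + R * Lσ) * D ^ k := by positivity
    have : Z ≤ (∑ i, |z i|) + 1 := by rw [hZdef]; exact hsum_ge
    nlinarith [mul_nonneg (mul_nonneg hM0 hSnnL) (sub_nonneg.2 this)]
  calc ‖fullNet σ dims w β L z - fullNet σ dims w' β' L z‖
      ≤ (1 + R * Lσ) * D ^ k * Z * S := main
    _ ≤ (1 + R * Lσ) * D ^ (L - 1) * ((∑ i, |z i|) + 1) * S := final
    _ = (1 + R * Lσ) * D ^ (L - 1) * ((∑ i, |z i|) + 1) * S := rfl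
end

section
/- In the setting of the previous statement, assume additionally K† is injective and suppose y^m → y in 𝒴, K^m u_m − y^m → 0, and K^m u† − y^m → 0 for some fixed u† ∈ 𝒱. If u_m ⇀ ũ weakly in 𝒱, then K†ũ = K†u† and hence ũ = u†. -/
open scoped Topology
open Filter

/-- in the setting of Statement 11, assume additionally `K†`
injective, `y^m → y`, `K^m u_m − y^m → 0` and `K^m u† − y^m → 0` for a fixed
`u† ∈ 𝒱`. If `u_m ⇀ ũ` weakly in `𝒱`, then `K† ũ = K† u†` and hence `ũ = u†`. -/
theorem weak_limit_identification
    {𝓥 𝓨 : Type*} [NormedAddCommGroup 𝓥] [NormedSpace ℝ 𝓥] [CompleteSpace 𝓥]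
    [NormedAddCommGroup 𝓨] [NormedSpace ℝ 𝓨] [CompleteSpace 𝓨]
    (K : ℕ → 𝓥 →L[ℝ] 𝓨) (Kd : 𝓥 →L[ℝ] 𝓨)
    (hunif : ∀ M : ℝ, ∀ ε > (0 : ℝ), ∃ N : ℕ, ∀ m ≥ N, ∀ z : 𝓥, ‖z‖ ≤ M →
      ‖K m z - Kd z‖ ≤ ε)
    (hws : ∀ (vm : ℕ → 𝓥) (v : 𝓥),
      (∀ φ : StrongDual ℝ 𝓥, Tendsto (fun m => φ (vm m)) atTop (𝓝 (φ v))) →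
      Tendsto (fun m => Kd (vm m)) atTop (𝓝 (Kd v)))
    (hinj : Function.Injective Kd)
    (ym : ℕ → 𝓨) (y : 𝓨) (hy : Tendsto ym atTop (𝓝 y))
    (um : ℕ → 𝓥) (udag : 𝓥) (util : 𝓥)
    (hdata : Tendsto (fun m => K m (um m) - ym m) atTop (𝓝 0))
    (hdagdata : Tendsto (fun m => K m udag - ym m) atTop (𝓝 0))
    (hweak : ∀ φ : StrongDual ℝ 𝓥,
      Tendsto (fun m => φ (um m)) atTop (𝓝 (φ util))) :
    Kd util = Kd udag ∧ util = udag := by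
  -- Step 1: the sequence `um` is bounded, by Banach–Steinhaus.
  have hb : ∀ φ : StrongDual ℝ 𝓥, ∃ C, ∀ m,
      ‖NormedSpace.inclusionInDoubleDual ℝ 𝓥 (um m) φ‖ ≤ C := by
    intro φ
    have h1 : Tendsto (fun m => ‖φ (um m)‖) atTop (𝓝 ‖φ util‖) := (hweak φ).norm
    obtain ⟨C, hC⟩ := h1.bddAbove_range
    exact ⟨C, fun m => hC ⟨m, rfl⟩⟩
  obtain ⟨C, hC⟩ := banach_steinhaus hb
  have hbound : ∀ m, ‖um m‖ ≤ C := by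
    intro m
    have := (NormedSpace.inclusionInDoubleDualLi ℝ (E := 𝓥)).norm_map (um m)
    calc ‖um m‖ = ‖NormedSpace.inclusionInDoubleDual ℝ 𝓥 (um m)‖ := this.symm
      _ ≤ C := hC m
  -- Step 2: `K m (um m) → y`.
  have hKy : Tendsto (fun m => K m (um m)) atTop (𝓝 y) := by
    have := hdata.add hy
    simpa using this
  -- Step 3: `K m (um m) - Kd (um m) → 0`.
  have hdiff : Tendsto (fun m => K m (um m) - Kd (um m)) atTop (𝓝 0) := by
    rw [NormedAddCommGroup.tendsto_nhds_zero]
    intro ε hε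
    obtain ⟨N, hN⟩ := hunif C (ε / 2) (by positivity)
    filter_upwards [eventually_ge_atTop N] with m hm
    exact lt_of_le_of_lt (hN m hm (um m) (hbound m)) (by linarith)
  -- hence `Kd (um m) → y`.
  have hKdy : Tendsto (fun m => Kd (um m)) atTop (𝓝 y) := by
    have := hKy.sub hdiff
    simpa using this
  have hKdutil : Kd util = y := tendsto_nhds_unique (hws um util hweak) hKdy
  -- Step 4: `K m udag → y` and `K m udag - Kd udag → 0`, hence `Kd udag = y`.
  have hKdagy : Tendsto (fun m => K m udag) atTop (𝓝 y) := by
    have := hdagdata.add hy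
    simpa using this
  have hdiffdag : Tendsto (fun m => K m udag - Kd udag) atTop (𝓝 0) := by
    rw [NormedAddCommGroup.tendsto_nhds_zero]
    intro ε hε
    obtain ⟨N, hN⟩ := hunif ‖udag‖ (ε / 2) (by positivity)
    filter_upwards [eventually_ge_atTop N] with m hm
    exact lt_of_le_of_lt (hN m hm udag le_rfl) (by linarith)
  have hKddag : Kd udag = y := by
    have h2 : Tendsto (fun _ : ℕ => Kd udag) atTop (𝓝 y) := by
      have := hKdagy.sub hdiffdag
      simpa using this
    exact tendsto_nhds_unique tendsto_const_nhds h2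
  have hEq : Kd util = Kd udag := by rw [hKdutil, hKddag]
  exact ⟨hEq, hinj hEq⟩
end
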